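/- arXiv:2103.08868 — 3 statements merged into one kernel-verified Lean document; each statement's English description precedes it below -/
import Mathlib

section
/- For M = [0,R] and σ a finite nonempty subset of ℝ^d × [0,R], define κ_C(σ) = inf over w ∈ ℝ^d of max over (x,r) ∈ σ of (‖x − w‖ − r)⁺. Then κ_C(σ) ≤ t if and only if the closed balls {B̄_{t+r}(x) : (x,r) ∈ σ} have nonempty common intersection. -/
noncomputable instance (priority := low) {α : Type*} : DecidableEq α := Classical.decEq α

/-- The Čech filtration function for balls with initial radii:
`κ_C(σ) = inf_w max_{(x,r) ∈ σ} (‖x - w‖ - r)⁺`. -/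
noncomputable def kappaC {d : ℕ} (σ : Finset (EuclideanSpace ℝ (Fin d) × ℝ))
    (hσ : σ.Nonempty) : ℝ :=
  ⨅ w : EuclideanSpace ℝ (Fin d), σ.sup' hσ (fun p => max (‖p.1 - w‖ - p.2) 0)

/-!
The function `w ↦ max_{(x,r) ∈ σ} (dist x w - r)⁺` is continuous and tends to infinity at
infinity, so on a proper space its infimum `κ_C(σ)` is attained; for `t ≥ 0`, a point `w` with
`(dist x w - r)⁺ ≤ t` for all `(x, r) ∈ σ` is exactly a point of `⋂ B̄_{t+r}(x)`.
-/

open Filter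

section BallExcess

variable {X : Type*} [PseudoMetricSpace X] (s : Finset (X × ℝ)) (hs : s.Nonempty)

noncomputable def ballExcess (w : X) : ℝ :=
  s.sup' hs fun p => max (dist p.1 w - p.2) 0

theorem le_ballExcess {p : X × ℝ} (hp : p ∈ s) (w : X) :
    max (dist p.1 w - p.2) 0 ≤ ballExcess s hs w :=
  Finset.le_sup' (fun q : X × ℝ => max (dist q.1 w - q.2) 0) hp

theorem continuous_ballExcess : Continuous (ballExcess s hs) :=
  Continuous.finset_sup'_apply hs fun _ _ => by fun_prop

theorem tendsto_ballExcess_cocompact [ProperSpace X] :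
    Tendsto (ballExcess s hs) (cocompact X) atTop := by
  obtain ⟨p, hp⟩ := id hs
  exact tendsto_atTop_mono (fun w => (le_max_left _ _).trans (le_ballExcess s hs hp w))
    (tendsto_atTop_add_const_right _ (-p.2) (tendsto_dist_left_cocompact_atTop p.1))

theorem ballExcess_le_iff {t : ℝ} (ht : 0 ≤ t) {w : X} :
    ballExcess s hs w ≤ t ↔ w ∈ ⋂ p ∈ s, Metric.closedBall p.1 (t + p.2) := by
  simp only [ballExcess, Finset.sup'_le_iff, max_le_iff, ht, and_true, Set.mem_iInter,
    Metric.mem_closedBall, dist_comm w, sub_le_iff_le_add]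

theorem ballExcess_nonneg (w : X) : 0 ≤ ballExcess s hs w :=
  (le_max_right _ _).trans (le_ballExcess s hs hs.choose_spec w)

theorem bddBelow_range_ballExcess : BddBelow (Set.range (ballExcess s hs)) :=
  ⟨0, Set.forall_mem_range.2 (ballExcess_nonneg s hs)⟩

theorem exists_ballExcess_eq_iInf [ProperSpace X] [Nonempty X] :
    ∃ w₀, ballExcess s hs w₀ = ⨅ w, ballExcess s hs w := by
  obtain ⟨w₀, hw₀⟩ :=
    (continuous_ballExcess s hs).exists_forall_le (tendsto_ballExcess_cocompact s hs)
  exact ⟨w₀, le_antisymm (le_ciInf hw₀) (ciInf_le (bddBelow_range_ballExcess s hs) w₀)⟩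

theorem iInf_ballExcess_le_iff [ProperSpace X] [Nonempty X] {t : ℝ} (ht : 0 ≤ t) :
    ⨅ w, ballExcess s hs w ≤ t ↔ (⋂ p ∈ s, Metric.closedBall p.1 (t + p.2)).Nonempty := by
  obtain ⟨w₀, hw₀⟩ := exists_ballExcess_eq_iInf s hs
  constructor
  · intro h
    exact ⟨w₀, (ballExcess_le_iff s hs ht).1 (hw₀ ▸ h)⟩
  · rintro ⟨w, hw⟩
    exact (ciInf_le (bddBelow_range_ballExcess s hs) w).trans
      ((ballExcess_le_iff s hs ht).2 hw)

end BallExcess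

theorem kappaC_le_iff_general {d : ℕ}
    (σ : Finset (EuclideanSpace ℝ (Fin d) × ℝ)) (hσ : σ.Nonempty)
    (t : ℝ) (ht : 0 ≤ t) :
    kappaC σ hσ ≤ t ↔
      (⋂ p ∈ σ, Metric.closedBall (p.1 : EuclideanSpace ℝ (Fin d)) (t + p.2)).Nonempty := by
  have hκ : kappaC σ hσ = ⨅ w, ballExcess σ hσ w := by
    simp only [kappaC, ballExcess, dist_eq_norm]
  rw [hκ, iInf_ballExcess_le_iff σ hσ ht]

/-- `κ_C(σ) ≤ t` iff the closed balls `B̄_{t+r}(x)`, `(x,r) ∈ σ`,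
have a common point. -/
theorem kappaC_le_iff {d : ℕ} (R : ℝ) (hR : 0 < R)
    (σ : Finset (EuclideanSpace ℝ (Fin d) × ℝ)) (hσ : σ.Nonempty)
    (hmarks : ∀ p ∈ σ, p.2 ∈ Set.Icc (0 : ℝ) R)
    (t : ℝ) (ht : 0 ≤ t) :
    kappaC σ hσ ≤ t ↔
      (⋂ p ∈ σ, Metric.closedBall (p.1 : EuclideanSpace ℝ (Fin d)) (t + p.2)).Nonempty :=
  kappaC_le_iff_general σ hσ t ht
end

section
/- Let {A_n}_{n∈ℕ} be a convex averaging sequence in ℝ^d, i.e., each A_n is a bounded convex Borel set, A_n ⊆ A_{n+1}, and r(A_n) → ∞ where r(A) = sup{r > 0 : A contains a ball of radius r}. Then for any fixed M > 0, ℓ(underline{A_n}^{(M)})/ℓ(A_n) → 1 as n → ∞, where underline{A}^{(M)} is the union of the lattice cubes Λ_M + z (z ∈ Mℤ^d) entirely contained in A. -/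
/-!
If a convex set `A` contains a ball `B(x, r)` with `r ≥ M`, then by convexity every point of the
homothetic image of `A` with centre `x` and ratio `1 - M / r` is the centre of a ball of radius `M`
inside `A`. For the sup norm on `Fin d → ℝ` such a ball contains the lattice cube through its centre,
so `ℓ(underline A) ≥ (1 - M / r) ^ d ℓ(A)`. Letting the inradius `r` of `A_n` tend to infinity gives
the limit.
-/

open scoped Pointwise ENNReal
open MeasureTheory Filter

/-- The union of the lattice cubes `Λ_M + z`, `z ∈ Mℤ^d`, entirely contained
in `A`, where `Λ_M = [−M/2, M/2)^d`. -/
def underlineCubes {d : ℕ} (M : ℝ) (A : Set (Fin d → ℝ)) : Set (Fin d → ℝ) :=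
  ⋃ z ∈ {z : Fin d → ℤ |
      ((fun i => M * (z i : ℝ)) +ᵥ (Set.univ.pi fun _ => Set.Ico (-(M / 2)) (M / 2))) ⊆ A},
    ((fun i => M * (z i : ℝ)) +ᵥ (Set.univ.pi fun _ => Set.Ico (-(M / 2)) (M / 2)))

open Metric

theorem Convex.ball_homothety_subset {E : Type*} [NormedAddCommGroup E] [NormedSpace ℝ E]
    {A : Set E} (hA : Convex ℝ A) {x : E} {r : ℝ} (hx : ball x r ⊆ A) {a : E} (ha : a ∈ A)
    {t : ℝ} (ht₀ : 0 < t) (ht₁ : t ≤ 1) :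
    ball (AffineMap.homothety x (1 - t) a) (t * r) ⊆ A := by
  have hc : AffineMap.homothety x (1 - t) a = (1 - t) • a +ᵥ t • x := by
    rw [AffineMap.homothety_apply, vsub_eq_sub, vadd_eq_add, vadd_eq_add]; module
  have hball : ball (t • x) (t * r) = t • ball x r := by
    rw [_root_.smul_ball ht₀.ne', Real.norm_of_nonneg ht₀.le]
  rw [hc, ← Metric.vadd_ball, hball]
  calc (1 - t) • a +ᵥ t • ball x r ⊆ (1 - t) • A + t • A :=
        (Set.vadd_set_subset_add (Set.smul_mem_smul_set ha)).trans
          (Set.add_subset_add_left (Set.smul_set_mono hx))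
    _ ⊆ A := hA.set_combo_subset (by linarith) ht₀.le (by ring)

theorem tendsto_one_sub_div_pow_atTop (c : ℝ) (n : ℕ) :
    Tendsto (fun r : ℝ => (1 - c / r) ^ n) atTop (nhds 1) := by
  simpa using ((tendsto_const_nhds.div_atTop tendsto_id).const_sub (1 : ℝ)).pow n

section LatticeCubes

variable {d : ℕ} {M : ℝ}

def latticeCube (M : ℝ) (z : Fin d → ℤ) : Set (Fin d → ℝ) :=
  (fun i => M * (z i : ℝ)) +ᵥ (Set.univ.pi fun _ => Set.Ico (-(M / 2)) (M / 2))

theorem underlineCubes_eq_biUnion_latticeCube (A : Set (Fin d → ℝ)) :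
    underlineCubes M A = ⋃ z ∈ {z | latticeCube M z ⊆ A}, latticeCube M z :=
  rfl

theorem mem_latticeCube_iff {z : Fin d → ℤ} {y : Fin d → ℝ} :
    y ∈ latticeCube M z ↔ ∀ i, y i - M * z i ∈ Set.Ico (-(M / 2)) (M / 2) := by
  simp [latticeCube, Set.mem_vadd_set_iff_neg_vadd_mem, neg_add_eq_sub]

theorem exists_mem_latticeCube (hM : 0 < M) (y : Fin d → ℝ) : ∃ z, y ∈ latticeCube M z := by
  refine ⟨fun i => ⌊y i / M + 1 / 2⌋, mem_latticeCube_iff.2 fun i => ?_⟩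
  have hy : y i = M * (y i / M) := by field_simp
  have h₁ := Int.floor_le (y i / M + 1 / 2)
  have h₂ := Int.lt_floor_add_one (y i / M + 1 / 2)
  constructor <;> nlinarith

theorem latticeCube_subset_ball (hM : 0 < M) {z : Fin d → ℤ} {y : Fin d → ℝ}
    (hy : y ∈ latticeCube M z) : latticeCube M z ⊆ ball y M := by
  intro w hw
  rw [mem_ball, dist_pi_lt_iff hM]
  intro i
  have hyi := mem_latticeCube_iff.1 hy i
  have hwi := mem_latticeCube_iff.1 hw i
  rw [Set.mem_Ico] at hyi hwi
  rw [Real.dist_eq, abs_sub_lt_iff]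
  constructor <;> linarith

theorem underlineCubes_subset (A : Set (Fin d → ℝ)) : underlineCubes M A ⊆ A :=
  Set.iUnion₂_subset fun _ hz => hz

theorem mem_underlineCubes_of_ball_subset (hM : 0 < M) {A : Set (Fin d → ℝ)} {y : Fin d → ℝ}
    (h : ball y M ⊆ A) : y ∈ underlineCubes M A := by
  obtain ⟨z, hy⟩ := exists_mem_latticeCube hM y
  rw [underlineCubes_eq_biUnion_latticeCube]
  exact Set.mem_biUnion ((latticeCube_subset_ball hM hy).trans h) hy

variable {A : Set (Fin d → ℝ)} {x : Fin d → ℝ} {r : ℝ}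

theorem homothety_image_subset_underlineCubes (hA : Convex ℝ A) (hx : ball x r ⊆ A)
    (hM : 0 < M) (hMr : M ≤ r) :
    AffineMap.homothety x (1 - M / r) '' A ⊆ underlineCubes M A := by
  rintro _ ⟨a, ha, rfl⟩
  have hr : 0 < r := hM.trans_le hMr
  refine mem_underlineCubes_of_ball_subset hM ?_
  simpa [div_mul_cancel₀ M hr.ne'] using
    hA.ball_homothety_subset hx ha (div_pos hM hr) ((div_le_one hr).2 hMr)

theorem ofReal_one_sub_div_pow_mul_volume_le (hA : Convex ℝ A) (hx : ball x r ⊆ A)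
    (hM : 0 < M) (hMr : M ≤ r) :
    ENNReal.ofReal ((1 - M / r) ^ d) * volume A ≤ volume (underlineCubes M A) := by
  have hpos : 0 ≤ (1 - M / r) ^ d :=
    pow_nonneg (sub_nonneg.2 ((div_le_one (hM.trans_le hMr)).2 hMr)) d
  calc ENNReal.ofReal ((1 - M / r) ^ d) * volume A
      = volume (AffineMap.homothety x (1 - M / r) '' A) := by
        rw [Measure.addHaar_image_homothety, Module.finrank_fin_fun, abs_of_nonneg hpos]
    _ ≤ volume (underlineCubes M A) :=
        measure_mono (homothety_image_subset_underlineCubes hA hx hM hMr)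

theorem volume_ratio_underlineCubes_le_one (hA : Bornology.IsBounded A) :
    (volume (underlineCubes M A)).toReal / (volume A).toReal ≤ 1 :=
  div_le_one_of_le₀ (ENNReal.toReal_mono hA.measure_lt_top.ne
    (measure_mono (underlineCubes_subset A))) ENNReal.toReal_nonneg

theorem one_sub_div_pow_le_volume_ratio_underlineCubes (hA : Convex ℝ A)
    (hAb : Bornology.IsBounded A) (hx : ball x r ⊆ A) (hM : 0 < M) (hMr : M ≤ r) :
    (1 - M / r) ^ d ≤ (volume (underlineCubes M A)).toReal / (volume A).toReal := by
  have hA_pos : 0 < volume A :=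
    (measure_ball_pos volume x (hM.trans_le hMr)).trans_le (measure_mono hx)
  have hA_fin : volume A ≠ ∞ := hAb.measure_lt_top.ne
  have hU_fin : volume (underlineCubes M A) ≠ ∞ :=
    ne_top_of_le_ne_top hA_fin (measure_mono (underlineCubes_subset A))
  have hpos : 0 ≤ (1 - M / r) ^ d :=
    pow_nonneg (sub_nonneg.2 ((div_le_one (hM.trans_le hMr)).2 hMr)) d
  rw [le_div_iff₀ (ENNReal.toReal_pos hA_pos.ne' hA_fin)]
  simpa [ENNReal.toReal_mul, ENNReal.toReal_ofReal hpos] using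
    ENNReal.toReal_mono hU_fin (ofReal_one_sub_div_pow_mul_volume_le hA hx hM hMr)

end LatticeCubes

theorem volume_ratio_underline_tendsto_one_general {d : ℕ}
    (A : ℕ → Set (Fin d → ℝ))
    (hbdd : ∀ n, Bornology.IsBounded (A n))
    (hconv : ∀ n, Convex ℝ (A n))
    (hinr : ∀ r : ℝ, 0 < r → ∃ N : ℕ, ∀ n ≥ N, ∃ x, Metric.ball x r ⊆ A n)
    (M : ℝ) (hM : 0 < M) :
    Tendsto (fun n => (volume (underlineCubes M (A n))).toReal / (volume (A n)).toReal)
      atTop (nhds 1) := by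
  refine tendsto_order.2 ⟨fun a ha => ?_, fun a ha => Eventually.of_forall fun n =>
    (volume_ratio_underlineCubes_le_one (hbdd n)).trans_lt ha⟩
  obtain ⟨r, hr, hMr⟩ :=
    (((tendsto_one_sub_div_pow_atTop M d).eventually (lt_mem_nhds ha)).and
      (eventually_gt_atTop M)).exists
  obtain ⟨N, hN⟩ := hinr r (hM.trans hMr)
  refine eventually_atTop.2 ⟨N, fun n hn => ?_⟩
  obtain ⟨x, hx⟩ := hN n hn
  exact hr.trans_le
    (one_sub_div_pow_le_volume_ratio_underlineCubes (hconv n) (hbdd n) hx hM hMr.le)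

/-- along a convex averaging sequence `{A_n}`, the union of lattice
cubes contained in `A_n` fills up `A_n` in the sense of Lebesgue measure:
`ℓ(underline{A_n}^{(M)}) / ℓ(A_n) → 1`. -/
theorem volume_ratio_underline_tendsto_one {d : ℕ} (hd : 0 < d)
    (A : ℕ → Set (Fin d → ℝ))
    (hbdd : ∀ n, Bornology.IsBounded (A n))
    (hconv : ∀ n, Convex ℝ (A n))
    (hmeas : ∀ n, MeasurableSet (A n))
    (hmono : ∀ n, A n ⊆ A (n + 1))
    (hinr : ∀ r : ℝ, 0 < r → ∃ N : ℕ, ∀ n ≥ N, ∃ x, Metric.ball x r ⊆ A n)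
    (M : ℝ) (hM : 0 < M) :
    Tendsto (fun n => (volume (underlineCubes M (A n))).toReal / (volume (A n)).toReal)
      atTop (nhds 1) :=
  volume_ratio_underline_tendsto_one_general A hbdd hconv hinr M hM
end

section
/- Let {A_n} be a convex averaging sequence in ℝ^d (bounded convex sets, increasing, inradius tending to infinity). Then for every fixed h > 0, ℓ(∂A_n^h)/ℓ(A_n) → 0 as n → ∞, where ∂A^h = {x ∈ ℝ^d : dist(x, ∂A) ≤ h} is the h-neighborhood of the topological boundary of A. -/
/-!
If `ball x r ⊆ A` with `A` convex and `2h < r`, the `h`-neighbourhood of `∂A` lies in the shell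
between the images of `closure A` under the homotheties about `x` with ratios `1 - 2h/r` and
`1 + h/r`. The outer image contains the `h`-neighbourhood of `closure A`, because the ball of
radius `r` absorbs any displacement of length `h`; every point within `2h` of the inner image is
a convex combination of a point of `ball x r` and a point of `closure A`, hence lies in
`interior A`. Since the frontier of a convex set is null, the shell has measure
`((1 + h/r)^d - (1 - 2h/r)^d) ℓ(A)`, and this factor tends to `0` as the inradius `r` grows.
-/

open MeasureTheory Filter Metric Set AffineMap Module Topology

theorem shell_ratio_bounds {h r : ℝ} (hh : 0 < h) (hhr : 2 * h < r) :
    0 ≤ 1 - 2 * h / r ∧ 1 - 2 * h / r ≤ 1 ∧ 1 ≤ 1 + h / r := by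
  have hr : 0 < r := by linarith
  refine ⟨?_, sub_le_self _ (by positivity), le_add_of_nonneg_right (by positivity)⟩
  rw [sub_nonneg, div_le_one hr]
  exact hhr.le

section Convex

variable {E : Type*} [NormedAddCommGroup E] [NormedSpace ℝ E]

theorem Convex.cthickening_subset_image_homothety [ProperSpace E] {K : Set E}
    (hK : Convex ℝ K) (hKc : IsClosed K) {x : E} {r h : ℝ} (hr : 0 < r) (hh : 0 < h)
    (hball : closedBall x r ⊆ K) :
    Metric.cthickening h K ⊆ homothety x (1 + h / r) '' K := by
  rw [hKc.cthickening_eq_biUnion_closedBall hh.le]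
  intro y hy
  obtain ⟨a, haK, hya⟩ := mem_iUnion₂.1 hy
  rw [mem_closedBall] at hya
  set s := h / r
  have hs : 0 < s := div_pos hh hr
  -- the preimage of `y` is a convex combination of `a ∈ K` and `q ∈ closedBall x r`
  set q := x + (r / h) • (y - a)
  have hqK : q ∈ K := by
    refine hball ?_
    rw [mem_closedBall, dist_eq_norm, add_sub_cancel_left, norm_smul,
      Real.norm_of_nonneg (by positivity), ← dist_eq_norm]
    calc r / h * dist y a ≤ r / h * h := by gcongr
      _ = r := by field_simp
  refine ⟨(1 + s)⁻¹ • a + (s / (1 + s)) • q,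
    hK haK hqK (by positivity) (by positivity) (by field_simp), ?_⟩
  rw [homothety_apply, vsub_eq_sub, vadd_eq_add]
  simp only [q, s]
  match_scalars <;> field_simp <;> ring

theorem Convex.ball_homothety_subset_interior {A : Set E} (hA : Convex ℝ A) {x w : E}
    {r t : ℝ} (hball : ball x r ⊆ A) (hw : w ∈ closure A) (ht0 : 0 ≤ t) (ht1 : t < 1) :
    ball (homothety x t w) ((1 - t) * r) ⊆ interior A := by
  intro z hz
  have h1t : 0 < 1 - t := by linarith
  set q := x + (1 - t)⁻¹ • (z - homothety x t w)
  have hq : q ∈ interior A := by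
    refine interior_maximal hball isOpen_ball ?_
    rw [mem_ball, dist_eq_norm, add_sub_cancel_left, norm_smul,
      Real.norm_of_nonneg (by positivity), ← dist_eq_norm, inv_mul_lt_iff₀ h1t]
    exact hz
  have hz_eq : z = (1 - t) • q + t • w := by
    simp only [q, homothety_apply, vsub_eq_sub, vadd_eq_add]
    match_scalars <;> field_simp <;> ring
  rw [hz_eq]
  exact hA.combo_interior_closure_mem_interior hq hw h1t ht0 (by ring)

theorem Convex.cthickening_frontier_subset_diff [ProperSpace E] {A : Set E}
    (hA : Convex ℝ A) {x : E} {r h : ℝ} (hh : 0 < h) (hhr : 2 * h < r)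
    (hball : ball x r ⊆ A) :
    Metric.cthickening h (frontier A) ⊆
      homothety x (1 + h / r) '' closure A \ homothety x (1 - 2 * h / r) '' closure A := by
  have hr : 0 < r := by linarith
  intro y hy
  refine ⟨?_, ?_⟩
  · refine hA.closure.cthickening_subset_image_homothety isClosed_closure hr hh ?_
      (cthickening_subset_of_subset h frontier_subset_closure hy)
    rw [← closure_ball x hr.ne']
    exact closure_mono hball
  · rintro ⟨w, hw, rfl⟩
    obtain ⟨z, hz, hdist⟩ := mem_thickening_iff.1
      (cthickening_subset_thickening' (by positivity) (by linarith : h < 2 * h) _ hy)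
    refine hz.2 (hA.ball_homothety_subset_interior hball hw (shell_ratio_bounds hh hhr).1
      (sub_lt_self _ (by positivity)) ?_)
    rw [mem_ball, dist_comm]
    convert hdist using 1
    field_simp
    ring

end Convex

section Measure

variable {E : Type*} [NormedAddCommGroup E] [NormedSpace ℝ E] [MeasurableSpace E] [BorelSpace E]
  [FiniteDimensional ℝ E] (μ : Measure E) [μ.IsAddHaarMeasure]

theorem addHaar_image_homothety_diff {K : Set E} (hK : IsCompact K) (x : E) {a b : ℝ}
    (hb : 0 ≤ b) (hba : b ≤ a) (hsub : homothety x b '' K ⊆ homothety x a '' K) :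
    μ (homothety x a '' K \ homothety x b '' K) =
      ENNReal.ofReal (a ^ finrank ℝ E - b ^ finrank ℝ E) * μ K := by
  have ha : 0 ≤ a := hb.trans hba
  have hinner : IsCompact (homothety x b '' K) := hK.image (homothety_continuous x b)
  rw [measure_sdiff hsub hinner.measurableSet.nullMeasurableSet hinner.measure_lt_top.ne,
    Measure.addHaar_image_homothety, Measure.addHaar_image_homothety,
    abs_of_nonneg (by positivity), abs_of_nonneg (by positivity),
    ← ENNReal.sub_mul fun _ _ => hK.measure_lt_top.ne,
    ← ENNReal.ofReal_sub _ (by positivity)]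

theorem Convex.addHaar_cthickening_frontier_le {A : Set E} (hA : Convex ℝ A)
    (hAb : Bornology.IsBounded A) {x : E} {r h : ℝ} (hh : 0 < h) (hhr : 2 * h < r)
    (hball : ball x r ⊆ A) :
    μ (Metric.cthickening h (frontier A)) ≤
      ENNReal.ofReal ((1 + h / r) ^ finrank ℝ E - (1 - 2 * h / r) ^ finrank ℝ E) * μ A := by
  have hr : 0 < r := by linarith
  obtain ⟨hb0, hb1, ha1⟩ := shell_ratio_bounds hh hhr
  have hxA : x ∈ closure A := subset_closure (hball (mem_ball_self hr))
  have hinner : homothety x (1 - 2 * h / r) '' closure A ⊆ closure A := by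
    rintro _ ⟨w, hw, rfl⟩
    rw [homothety_eq_lineMap]
    exact hA.closure.lineMap_mem hxA hw ⟨hb0, hb1⟩
  have houter : closure A ⊆ homothety x (1 + h / r) '' closure A :=
    (self_subset_cthickening _).trans (hA.closure.cthickening_subset_image_homothety
      isClosed_closure hr hh (closure_ball x hr.ne' ▸ closure_mono hball))
  calc μ (Metric.cthickening h (frontier A))
      ≤ μ (homothety x (1 + h / r) '' closure A \ homothety x (1 - 2 * h / r) '' closure A) :=
        measure_mono (hA.cthickening_frontier_subset_diff hh hhr hball)
    _ = _ := addHaar_image_homothety_diff μ hAb.isCompact_closure x hb0 (hb1.trans ha1)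
        (hinner.trans houter)
    _ = _ := by rw [measure_closure_of_null_frontier (hA.addHaar_frontier μ)]

theorem Convex.addHaar_cthickening_frontier_div_le {A : Set E} (hA : Convex ℝ A)
    (hAb : Bornology.IsBounded A) {x : E} {r h : ℝ} (hh : 0 < h) (hhr : 2 * h < r)
    (hball : ball x r ⊆ A) :
    (μ (Metric.cthickening h (frontier A))).toReal / (μ A).toReal ≤
      (1 + h / r) ^ finrank ℝ E - (1 - 2 * h / r) ^ finrank ℝ E := by
  obtain ⟨hb0, hb1, ha1⟩ := shell_ratio_bounds hh hhr
  have hc : 0 ≤ (1 + h / r) ^ finrank ℝ E - (1 - 2 * h / r) ^ finrank ℝ E :=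
    sub_nonneg.2 (pow_le_pow_left₀ hb0 (hb1.trans ha1) _)
  refine div_le_of_le_mul₀ ENNReal.toReal_nonneg hc ?_
  calc (μ (Metric.cthickening h (frontier A))).toReal
      ≤ (ENNReal.ofReal ((1 + h / r) ^ finrank ℝ E - (1 - 2 * h / r) ^ finrank ℝ E) *
          μ A).toReal :=
        ENNReal.toReal_mono (ENNReal.mul_ne_top ENNReal.ofReal_ne_top hAb.measure_lt_top.ne)
          (hA.addHaar_cthickening_frontier_le μ hAb hh hhr hball)
    _ = _ := by rw [ENNReal.toReal_mul, ENNReal.toReal_ofReal hc]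

end Measure

theorem tendsto_zero_of_forall_eventually_le {ι κ : Type*} {l : Filter ι} {l' : Filter κ}
    [l'.NeBot] {f : ι → ℝ} {g : κ → ℝ} (hf : ∀ i, 0 ≤ f i)
    (hg : Tendsto g l' (𝓝 0)) (hfg : ∀ᶠ k in l', ∀ᶠ i in l, f i ≤ g k) :
    Tendsto f l (𝓝 0) := by
  refine tendsto_order.2 ⟨fun a ha => Eventually.of_forall fun i => ha.trans_le (hf i),
    fun ε hε => ?_⟩
  obtain ⟨k, hgk, hfk⟩ := ((hg.eventually (gt_mem_nhds hε)).and hfg).exists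
  exact hfk.mono fun i hi => hi.trans_lt hgk

theorem tendsto_one_add_div_pow_sub_one_sub_div_pow (a b : ℝ) (n : ℕ) :
    Tendsto (fun r : ℝ => (1 + a / r) ^ n - (1 - b / r) ^ n) atTop (𝓝 0) := by
  have ha : Tendsto (fun r : ℝ => a / r) atTop (𝓝 0) :=
    tendsto_const_nhds.div_atTop tendsto_id
  have hb : Tendsto (fun r : ℝ => b / r) atTop (𝓝 0) :=
    tendsto_const_nhds.div_atTop tendsto_id
  simpa using (((tendsto_const_nhds (x := (1 : ℝ))).add ha).pow n).sub
    (((tendsto_const_nhds (x := (1 : ℝ))).sub hb).pow n)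

theorem volume_ratio_boundary_tendsto_zero_general {d : ℕ}
    (A : ℕ → Set (Fin d → ℝ))
    (hbdd : ∀ n, Bornology.IsBounded (A n))
    (hconv : ∀ n, Convex ℝ (A n))
    (hinr : ∀ r : ℝ, 0 < r → ∃ N : ℕ, ∀ n ≥ N, ∃ x, Metric.ball x r ⊆ A n)
    (h : ℝ) (hh : 0 < h) :
    Tendsto
      (fun n =>
        (volume (Metric.cthickening h (frontier (A n)))).toReal /
          (volume (A n)).toReal)
      atTop (nhds 0) := by
  refine tendsto_zero_of_forall_eventually_le
    (fun n => div_nonneg ENNReal.toReal_nonneg ENNReal.toReal_nonneg)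
    (tendsto_one_add_div_pow_sub_one_sub_div_pow h (2 * h) d) ?_
  filter_upwards [eventually_gt_atTop (2 * h)] with r hr
  obtain ⟨N, hN⟩ := hinr r (by linarith)
  filter_upwards [eventually_ge_atTop N] with n hn
  obtain ⟨x, hx⟩ := hN n hn
  simpa only [finrank_fin_fun] using
    (hconv n).addHaar_cthickening_frontier_div_le volume (hbdd n) hh hr hx

/-- along a convex averaging sequence `{A_n}`, the `h`-neighborhood
of the topological boundary is negligible in measure: `ℓ(∂A_n^h)/ℓ(A_n) → 0`,
where `∂A^h = {x : dist(x, ∂A) ≤ h}` is the closed `h`-thickening of `∂A`. -/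
theorem volume_ratio_boundary_tendsto_zero {d : ℕ} (hd : 0 < d)
    (A : ℕ → Set (Fin d → ℝ))
    (hbdd : ∀ n, Bornology.IsBounded (A n))
    (hconv : ∀ n, Convex ℝ (A n))
    (hmeas : ∀ n, MeasurableSet (A n))
    (hmono : ∀ n, A n ⊆ A (n + 1))
    (hinr : ∀ r : ℝ, 0 < r → ∃ N : ℕ, ∀ n ≥ N, ∃ x, Metric.ball x r ⊆ A n)
    (h : ℝ) (hh : 0 < h) :
    Tendsto
      (fun n =>
        (volume (Metric.cthickening h (frontier (A n)))).toReal /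
          (volume (A n)).toReal)
      atTop (nhds 0) :=
  volume_ratio_boundary_tendsto_zero_general A hbdd hconv hinr h hh
end
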